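/- arXiv:0708.1838 — 3 statements merged into one kernel-verified Lean document; each statement's English description precedes it below -/
import Mathlib

section
/- Let X₁ = {x ∈ X : η(x) > 1/2}, X₋₁ = {x : η(x) < 1/2}, X₀ = {x : η(x) = 1/2} where X is the closed unit ball of ℝ^d, and let τ_x = d(x, X₀ ∪ X₁) if x ∈ X₋₁, τ_x = d(x, X₀ ∪ X₋₁) if x ∈ X₁. Define η̂ on X̂ = 3X by η̂(x) = η(x) if |x| ≤ 1 and η̂(x) = η(x/|x|) otherwise, and set X̂₁ = {x ∈ X̂ : η̂(x) > 1/2}. Then for every x ∈ X₁ the open Euclidean ball B(x, τ_x) is contained in X̂₁. -/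
open Metric
open scoped InnerProductSpace RealInnerProductSpace

lemma proj_norm_le {E : Type*} [NormedAddCommGroup E] [InnerProductSpace ℝ E]
    (x y : E) (hx : ‖x‖ ≤ 1) (hy : 1 ≤ ‖y‖) : ‖‖y‖⁻¹ • y - x‖ ≤ ‖y - x‖ := by
  have hy0 : ‖y‖ ≠ 0 := by positivity
  have h1 : ‖‖y‖⁻¹ • y‖ = 1 := by
    rw [norm_smul, norm_inv, norm_norm, inv_mul_cancel₀ hy0]
  have hsq : ‖‖y‖⁻¹ • y - x‖ ^ 2 ≤ ‖y - x‖ ^ 2 := by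
    rw [@norm_sub_sq_real, @norm_sub_sq_real, h1, real_inner_smul_left]
    have hiy : ⟪y, x⟫_ℝ ≤ ‖y‖ * ‖x‖ := real_inner_le_norm y x
    have hiy2 : -(‖y‖ * ‖x‖) ≤ ⟪y, x⟫_ℝ := neg_le_of_abs_le (abs_real_inner_le_norm y x)
    have h2 : (0:ℝ) < ‖y‖ := by positivity
    have h3 : ‖y‖⁻¹ * ⟪y, x⟫_ℝ = ⟪y, x⟫_ℝ / ‖y‖ := by ring
    nlinarith [sq_nonneg (‖y‖ - 1), mul_pos h2 h2, sq_nonneg (‖x‖ - 1),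
      mul_le_mul_of_nonneg_left hiy (le_of_lt (inv_pos.mpr h2)),
      inv_mul_cancel₀ hy0]
  have := Real.sqrt_le_sqrt hsq
  rwa [Real.sqrt_sq (norm_nonneg _), Real.sqrt_sq (norm_nonneg _)] at this

/-- Let `X` be the closed unit ball of ℝ^d, `X₁ = {x ∈ X : η x > 1/2}`,
`X₋₁ = {x ∈ X : η x < 1/2}`, `X₀ = {x ∈ X : η x = 1/2}`, and for `x ∈ X₁` let
`τ_x = d(x, X₀ ∪ X₋₁)`. Define `η̂` on `X̂ = 3X` by `η̂ x = η x` for `|x| ≤ 1` and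
`η̂ x = η (x/|x|)` otherwise. Then for every `x ∈ X₁` the open ball `B(x, τ_x)` is contained
in `X̂₁ = {x ∈ X̂ : η̂ x > 1/2}`. -/
theorem ball_tau_subset_extended_class {d : ℕ} (η : EuclideanSpace ℝ (Fin d) → ℝ)
    (x : EuclideanSpace ℝ (Fin d)) (hx : ‖x‖ ≤ 1) (hx1 : 1 / 2 < η x) :
    ball x (infDist x
        ({z | ‖z‖ ≤ 1 ∧ η z = 1 / 2} ∪ {z | ‖z‖ ≤ 1 ∧ η z < 1 / 2})) ⊆
      {z : EuclideanSpace ℝ (Fin d) | ‖z‖ ≤ 3 ∧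
        1 / 2 < (if ‖z‖ ≤ 1 then η z else η (‖z‖⁻¹ • z))} := by
  set S := ({z : EuclideanSpace ℝ (Fin d) | ‖z‖ ≤ 1 ∧ η z = 1 / 2} ∪
    {z | ‖z‖ ≤ 1 ∧ η z < 1 / 2}) with hSdef
  intro y hy
  rw [mem_ball] at hy
  by_cases hS : S.Nonempty
  · obtain ⟨z, hz⟩ := hS
    have hz1 : ‖z‖ ≤ 1 := by rcases hz with h | h <;> exact h.1
    have hτ2 : infDist x S ≤ 2 := by
      refine le_trans (infDist_le_dist_of_mem hz) ?_
      calc dist x z = ‖x - z‖ := by rw [dist_eq_norm]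
        _ ≤ ‖x‖ + ‖z‖ := norm_sub_le _ _
        _ ≤ 2 := by linarith
    have hy3 : ‖y‖ ≤ 3 := by
      have : ‖y‖ - ‖x‖ ≤ ‖y - x‖ := norm_sub_norm_le y x
      rw [dist_eq_norm] at hy
      linarith
    refine ⟨hy3, ?_⟩
    by_cases hy1 : ‖y‖ ≤ 1
    · rw [if_pos hy1]
      by_contra h
      push_neg at h
      have hmem : y ∈ S := by
        rcases lt_or_eq_of_le h with h' | h'
        · exact Or.inr ⟨hy1, h'⟩
        · exact Or.inl ⟨hy1, h'⟩
      have := infDist_le_dist_of_mem (x := x) hmem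
      rw [dist_comm] at this
      linarith
    · rw [if_neg hy1]
      push_neg at hy1
      by_contra h
      push_neg at h
      have hn : ‖‖y‖⁻¹ • y‖ = 1 := by
        rw [norm_smul, norm_inv, norm_norm, inv_mul_cancel₀ (by positivity)]
      have hmem : ‖y‖⁻¹ • y ∈ S := by
        rcases lt_or_eq_of_le h with h' | h'
        · exact Or.inr ⟨le_of_eq hn, h'⟩
        · exact Or.inl ⟨le_of_eq hn, h'⟩
      have h1 := infDist_le_dist_of_mem (x := x) hmem
      have h2 : dist (‖y‖⁻¹ • y) x ≤ dist y x := by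
        rw [dist_eq_norm, dist_eq_norm]
        exact proj_norm_le x y hx hy1.le
      rw [dist_comm] at h1
      linarith
  · rw [Set.not_nonempty_iff_eq_empty] at hS
    rw [hS, infDist_empty] at hy
    exact absurd hy (not_lt.mpr dist_nonneg)
end

section
/- For every σ ≥ 1 and every multi-index α ∈ ℕ^d, ∫_{ℝ^d} |D^α_x(e^{-σ²|x|²})|² dx ≤ σ^{2|α| − d} 2^{|α|} α! π^{d/2}. -/
open MeasureTheory Real

/-- Partial derivative in the `i`-th coordinate. -/
noncomputable def pderiv' {d : ℕ} (i : Fin d) (f : (Fin d → ℝ) → ℝ) : (Fin d → ℝ) → ℝ :=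
  fun x => deriv (fun t => f (Function.update x i t)) (x i)

/-- The multi-index derivative `D^α = ∏ᵢ ∂ᵢ^{αᵢ}`. -/
noncomputable def mderiv {d : ℕ} (α : Fin d → ℕ) (f : (Fin d → ℝ) → ℝ) : (Fin d → ℝ) → ℝ :=
  (List.finRange d).foldr (fun i g => (pderiv' i)^[α i] g) f

/-!
The Gaussian `e^{-σ²|x|²}` is a product of one-variable Gaussians, so `D^α` of it is the product
of one-variable derivatives and, by Fubini, the integral splits into one-dimensional integrals.
In one variable `e^{-σ²t²} = γ(c t)` with `γ(u) = e^{-u²/2}` and `c = √2 σ`; rescaling turns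
`∫ ((e^{-σ²t²})⁽ⁿ⁾)²` into `c^{2n-1} ∫ (γ⁽ⁿ⁾)²`. Since `γ⁽ⁿ⁾ = (-1)ⁿ Heₙ γ` and `γ² ≤ γ`, we get
`∫ (γ⁽ⁿ⁾)² ≤ ∫ Heₙ² γ = n! √(2π)`, the last identity by integrating by parts `n` times against
`γ⁽ⁿ⁾` until only `Heₙ⁽ⁿ⁾ = n!` is left.
-/

open Polynomial
open scoped Nat

section

variable {ι : Type*} [Fintype ι] [DecidableEq ι]

lemma prod_apply_update (h : ι → ℝ → ℝ) (x : ι → ℝ) (i : ι) (t : ℝ) :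
    ∏ j, h j (Function.update x i t j) = h i t * ∏ j ∈ Finset.univ \ {i}, h j (x j) := by
  simp_rw [Function.apply_update h x i t]
  exact Finset.prod_update_of_mem (Finset.mem_univ i) _ _

lemma prod_update_apply (h : ι → ℝ → ℝ) (x : ι → ℝ) (i : ι) (g : ℝ → ℝ) :
    ∏ j, Function.update h i g j (x j) = g (x i) * ∏ j ∈ Finset.univ \ {i}, h j (x j) := by
  simp_rw [Function.apply_update (fun j (f : ℝ → ℝ) => f (x j)) h i g]
  exact Finset.prod_update_of_mem (Finset.mem_univ i) _ _

end

section

variable {d : ℕ}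

lemma pderiv'_prod (i : Fin d) (h : Fin d → ℝ → ℝ) :
    pderiv' i (fun x => ∏ j, h j (x j))
      = fun x => ∏ j, Function.update h i (deriv (h i)) j (x j) := by
  funext x
  simp only [pderiv', prod_apply_update, prod_update_apply, deriv_mul_const_field]

lemma iterate_pderiv'_prod (i : Fin d) (k : ℕ) (h : Fin d → ℝ → ℝ) :
    (pderiv' i)^[k] (fun x => ∏ j, h j (x j))
      = fun x => ∏ j, Function.update h i (deriv^[k] (h i)) j (x j) := by
  induction k with
  | zero => simp
  | succ k ih =>
    rw [Function.iterate_succ_apply', ih, pderiv'_prod, Function.update_idem,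
      Function.update_self, ← Function.iterate_succ_apply' deriv]

lemma foldr_iterate_pderiv'_prod (α : Fin d → ℕ) (h : Fin d → ℝ → ℝ) {L : List (Fin d)}
    (hL : L.Nodup) :
    L.foldr (fun i g => (pderiv' i)^[α i] g) (fun x => ∏ j, h j (x j))
      = fun x => ∏ j, (if j ∈ L then deriv^[α j] (h j) else h j) (x j) := by
  induction L with
  | nil => simp
  | cons i L ih =>
    obtain ⟨hiL, hL⟩ := List.nodup_cons.mp hL
    rw [List.foldr_cons, ih hL, iterate_pderiv'_prod]
    funext x
    refine Finset.prod_congr rfl fun j _ => ?_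
    rcases eq_or_ne j i with rfl | hji
    · simp [hiL]
    · simp [hji]

lemma mderiv_prod (α : Fin d → ℕ) (h : Fin d → ℝ → ℝ) :
    mderiv α (fun x => ∏ j, h j (x j)) = fun x => ∏ j, deriv^[α j] (h j) (x j) := by
  simp [mderiv, foldr_iterate_pderiv'_prod α h (List.nodup_finRange d)]

end

lemma integrable_aeval_mul_exp_neg_mul_sq {R : Type*} [CommSemiring R] [Algebra R ℝ] (p : R[X])
    {b : ℝ} (hb : 0 < b) : Integrable fun x : ℝ => aeval x p * exp (-b * x ^ 2) := by
  have hmonomial (k : ℕ) : Integrable fun x : ℝ => x ^ k * exp (-b * x ^ 2) := by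
    simpa using
      integrable_rpow_mul_exp_neg_mul_sq hb (s := k) (neg_one_lt_zero.trans_le k.cast_nonneg)
  simp_rw [aeval_eq_sum_range, Finset.sum_mul, Algebra.smul_def, mul_assoc]
  exact integrable_finsetSum _ fun k _ => (hmonomial k).const_mul _

lemma integral_sq_iterate_deriv_comp_mul {f : ℝ → ℝ} {n : ℕ} (hf : ContDiff ℝ n f) (c : ℝ) :
    ∫ x, (deriv^[n] (fun t => f (c * t)) x) ^ 2
      = |c⁻¹| * c ^ (2 * n) * ∫ x, (deriv^[n] f x) ^ 2 := by
  simp_rw [← iteratedDeriv_eq_iterate, iteratedDeriv_comp_const_mul hf c, mul_pow, ← pow_mul,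
    mul_comm n 2]
  rw [integral_const_mul, Measure.integral_comp_mul_left (fun y => iteratedDeriv n f y ^ 2),
    smul_eq_mul]
  ring

lemma neg_one_pow_sq {R : Type*} [Monoid R] [HasDistribNeg R] (n : ℕ) :
    ((-1 : R) ^ n) ^ 2 = 1 := by
  rw [← pow_mul, pow_mul', neg_one_sq, one_pow]

noncomputable def stdGaussian (x : ℝ) : ℝ := exp (-(x ^ 2 / 2))

lemma stdGaussian_eq_exp_neg_mul_sq (x : ℝ) : stdGaussian x = exp (-(1 / 2) * x ^ 2) := by
  rw [stdGaussian]; ring_nf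

lemma iterate_deriv_stdGaussian (n : ℕ) :
    deriv^[n] stdGaussian = fun x => (-1) ^ n * aeval x (hermite n) * stdGaussian x :=
  funext (deriv_gaussian_eq_hermite_mul_gaussian n)

lemma integrable_aeval_mul_iterate_deriv_stdGaussian (p : ℤ[X]) (n : ℕ) :
    Integrable fun x => aeval x p * deriv^[n] stdGaussian x := by
  have h := integrable_aeval_mul_exp_neg_mul_sq (p * hermite n) (b := 1 / 2) (by norm_num)
  convert h.const_mul ((-1) ^ n) using 2 with x
  simp only [iterate_deriv_stdGaussian, stdGaussian_eq_exp_neg_mul_sq, map_mul]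
  ring

lemma differentiable_iterate_deriv_stdGaussian (n : ℕ) :
    Differentiable ℝ (deriv^[n] stdGaussian) := by
  rw [iterate_deriv_stdGaussian]
  exact (((hermite n).differentiable_aeval).const_mul _).mul (by unfold stdGaussian; fun_prop)

lemma integral_aeval_mul_iterate_deriv_stdGaussian (p : ℤ[X]) (n : ℕ) :
    ∫ x, aeval x p * deriv^[n] stdGaussian x
      = (-1) ^ n * ∫ x, aeval x (derivative^[n] p) * stdGaussian x := by
  induction n generalizing p with
  | zero => simp
  | succ n ih =>
    have hv (x : ℝ) : HasDerivAt (deriv^[n] stdGaussian) (deriv^[n + 1] stdGaussian x) x := by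
      rw [Function.iterate_succ_apply']
      exact (differentiable_iterate_deriv_stdGaussian n x).hasDerivAt
    rw [integral_mul_deriv_eq_deriv_mul_of_integrable (fun x _ => p.hasDerivAt_aeval x)
        (fun x _ => hv x) (integrable_aeval_mul_iterate_deriv_stdGaussian p (n + 1))
        (integrable_aeval_mul_iterate_deriv_stdGaussian (derivative p) n)
        (integrable_aeval_mul_iterate_deriv_stdGaussian p n),
      ih, Function.iterate_succ_apply, pow_succ]
    ring

lemma iterate_derivative_hermite_self (n : ℕ) : derivative^[n] (hermite n) = (n ! : ℤ[X]) := by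
  have hdeg : (derivative^[n] (hermite n)).natDegree = 0 := by
    have := natDegree_iterate_derivative (hermite n) n
    rwa [natDegree_hermite, Nat.sub_self, Nat.le_zero] at this
  rw [eq_C_of_natDegree_eq_zero hdeg, coeff_iterate_derivative, zero_add,
    coeff_hermite_self, Nat.descFactorial_self, nsmul_one, map_natCast]

lemma integral_stdGaussian : ∫ x, stdGaussian x = √(2 * π) := by
  simp_rw [stdGaussian_eq_exp_neg_mul_sq, integral_gaussian]
  ring_nf

lemma integral_hermite_sq_mul_stdGaussian (n : ℕ) :
    ∫ x, aeval x (hermite n) ^ 2 * stdGaussian x = n ! * √(2 * π) := by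
  calc ∫ x, aeval x (hermite n) ^ 2 * stdGaussian x
      = (-1) ^ n * ∫ x, aeval x (hermite n) * deriv^[n] stdGaussian x := by
        rw [← integral_const_mul]
        congr 1 with x
        rw [iterate_deriv_stdGaussian]
        linear_combination (-aeval x (hermite n) ^ 2 * stdGaussian x) * neg_one_pow_sq (R := ℝ) n
    _ = n ! * √(2 * π) := by
        rw [integral_aeval_mul_iterate_deriv_stdGaussian, iterate_derivative_hermite_self]
        simp only [map_natCast]
        rw [integral_const_mul, integral_stdGaussian, ← mul_assoc, ← sq, neg_one_pow_sq n, one_mul]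

lemma contDiff_stdGaussian {n : WithTop ℕ∞} : ContDiff ℝ n stdGaussian := by
  unfold stdGaussian; fun_prop

lemma stdGaussian_sq_le (x : ℝ) : stdGaussian x ^ 2 ≤ stdGaussian x := by
  have hle : stdGaussian x ≤ 1 := exp_le_one_iff.mpr (by nlinarith [sq_nonneg x])
  rw [sq]
  exact mul_le_of_le_one_right (exp_pos _).le hle

lemma integral_sq_iterate_deriv_stdGaussian_le (n : ℕ) :
    ∫ x, (deriv^[n] stdGaussian x) ^ 2 ≤ n ! * √(2 * π) := by
  rw [← integral_hermite_sq_mul_stdGaussian]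
  have hint : Integrable fun x => aeval x (hermite n) ^ 2 * stdGaussian x := by
    convert integrable_aeval_mul_exp_neg_mul_sq (hermite n ^ 2) (b := 1 / 2) (by norm_num) using 2
    rw [map_pow, stdGaussian_eq_exp_neg_mul_sq]
  refine integral_mono_of_nonneg (.of_forall fun x => sq_nonneg _) hint (.of_forall fun x => ?_)
  calc (deriv^[n] stdGaussian x) ^ 2 = aeval x (hermite n) ^ 2 * stdGaussian x ^ 2 := by
        rw [iterate_deriv_stdGaussian, mul_pow, mul_pow, neg_one_pow_sq n, one_mul]
    _ ≤ aeval x (hermite n) ^ 2 * stdGaussian x := by gcongr; exact stdGaussian_sq_le x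

lemma integral_sq_iterate_deriv_exp_neg_mul_sq_le {σ : ℝ} (hσ : 0 < σ) (n : ℕ) :
    ∫ x, (deriv^[n] (fun t => exp (-σ ^ 2 * t ^ 2)) x) ^ 2
      ≤ σ ^ (2 * n) / σ * (2 ^ n * n ! * √π) := by
  set c := √2 * σ with hc
  have hc2 : c ^ 2 = 2 * σ ^ 2 := by rw [hc, mul_pow, sq_sqrt zero_le_two]
  have hscale : (fun t => exp (-σ ^ 2 * t ^ 2)) = fun t => stdGaussian (c * t) := by
    funext t
    rw [stdGaussian, mul_pow, hc2]
    ring_nf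
  calc ∫ x, (deriv^[n] (fun t => exp (-σ ^ 2 * t ^ 2)) x) ^ 2
      = |c⁻¹| * c ^ (2 * n) * ∫ x, (deriv^[n] stdGaussian x) ^ 2 := by
        rw [hscale, integral_sq_iterate_deriv_comp_mul contDiff_stdGaussian]
    _ ≤ |c⁻¹| * c ^ (2 * n) * (n ! * √(2 * π)) := by
        gcongr; exact integral_sq_iterate_deriv_stdGaussian_le n
    _ = σ ^ (2 * n) / σ * (2 ^ n * n ! * √π) := by
        rw [abs_of_pos (by positivity), pow_mul, hc2, mul_pow, sqrt_mul zero_le_two, hc, ← pow_mul]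
        field_simp

/-- For every `σ ≥ 1` and every multi-index `α ∈ ℕ^d`,
`∫_{ℝ^d} |D^α_x(e^{-σ²|x|²})|² dx ≤ σ^{2|α| - d} 2^{|α|} α! π^{d/2}`. -/
theorem gaussian_deriv_scaled_bound (d : ℕ) (σ : ℝ) (hσ : 1 ≤ σ) (α : Fin d → ℕ) :
    ∫ x : Fin d → ℝ, (mderiv α (fun x => Real.exp (-σ ^ 2 * ∑ i, (x i) ^ 2)) x) ^ 2 ≤
      σ ^ (2 * (∑ i, α i : ℤ) - d) * 2 ^ (∑ i, α i) *
        (∏ i, (Nat.factorial (α i) : ℝ)) * π ^ ((d : ℝ) / 2) := by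
  have hσ0 : 0 < σ := one_pos.trans_le hσ
  set g : ℝ → ℝ := fun t => exp (-σ ^ 2 * t ^ 2)
  have hprod : (fun x : Fin d → ℝ => exp (-σ ^ 2 * ∑ i, x i ^ 2)) = fun x => ∏ j, g (x j) := by
    funext x
    rw [Finset.mul_sum, exp_sum]
  calc ∫ x, (mderiv α (fun x => exp (-σ ^ 2 * ∑ i, x i ^ 2)) x) ^ 2
      = ∏ j, ∫ t, (deriv^[α j] g t) ^ 2 := by
        simp_rw [hprod, mderiv_prod α (fun _ => g), ← Finset.prod_pow]
        exact integral_fintype_prod_volume_eq_prod (fun j t => (deriv^[α j] g t) ^ 2)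
    _ ≤ ∏ j, σ ^ (2 * α j) / σ * (2 ^ α j * (α j)! * √π) :=
        Finset.prod_le_prod (fun j _ => integral_nonneg fun _ => sq_nonneg _)
          fun j _ => integral_sq_iterate_deriv_exp_neg_mul_sq_le hσ0 (α j)
    _ = σ ^ (2 * (∑ i, α i : ℤ) - d) * 2 ^ (∑ i, α i) *
        (∏ i, ((α i)! : ℝ)) * π ^ ((d : ℝ) / 2) := by
        simp only [Finset.prod_mul_distrib, Finset.prod_div_distrib, Finset.prod_pow_eq_pow_sum,
          Finset.prod_const, Finset.card_univ, Fintype.card_fin]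
        have hσpow : σ ^ (2 * (∑ i, α i : ℤ) - d) = σ ^ (∑ i, 2 * α i) / σ ^ d := by
          rw [zpow_sub₀ hσ0.ne', ← Finset.mul_sum]
          norm_cast
        have hπ : π ^ ((d : ℝ) / 2) = √π ^ d := by
          rw [sqrt_eq_rpow, ← rpow_natCast, ← rpow_mul pi_pos.le]
          ring_nf
        rw [hσpow, hπ]
        ring
end

section
/- Let H be a RKHS of a bounded kernel on X, λ > 0, and let (f̃, b̃) ∈ H × ℝ minimize λ‖f‖²_H + R_{l,P}(f + b) over f ∈ H, b ∈ ℝ, where l is the hinge loss and P is a distribution on X × Y such that neither P(y=1|x)=1 a.s. nor P(y=−1|x)=1 a.s. Then the offset satisfies |b̃| ≤ ‖f̃‖_∞ + 1. -/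
open MeasureTheory

/-- Bound on the SVM offset: let `H` be a RKHS (modelled by an inner product space `H` with a
bounded evaluation `ι : H → X → ℝ`, `|ι f x| ≤ K ‖f‖`, coming from a bounded kernel), `λ > 0`,
and let `(f̃, b̃)` minimize `λ‖f‖² + R_{l,P}(f + b)` for the hinge loss, where the distribution
(given by marginal `μ` and conditional probability `η`) satisfies neither `η = 1` a.s. nor
`η = 0` a.s. Then `|b̃| ≤ ‖f̃‖_∞ + 1`. -/
theorem svm_offset_bound {X : Type*} [MeasurableSpace X] {H : Type*}
    [NormedAddCommGroup H] [InnerProductSpace ℝ H] (ι : H → X → ℝ) (K : ℝ)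
    (hK : ∀ (f : H) (x : X), |ι f x| ≤ K * ‖f‖) (hιm : ∀ f : H, Measurable (ι f))
    (μ : Measure X) [IsProbabilityMeasure μ] (η : X → ℝ) (hηm : Measurable η)
    (hη : ∀ x, η x ∈ Set.Icc (0 : ℝ) 1)
    (hnd1 : ¬ ∀ᵐ x ∂μ, η x = 1) (hnd0 : ¬ ∀ᵐ x ∂μ, η x = 0)
    (lam : ℝ) (hlam : 0 < lam) (ftil : H) (btil : ℝ)
    (hmin : ∀ (f : H) (b : ℝ),
      lam * ‖ftil‖ ^ 2 + ∫ x, (η x * max 0 (1 - (ι ftil x + btil)) +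
          (1 - η x) * max 0 (1 + (ι ftil x + btil))) ∂μ ≤
        lam * ‖f‖ ^ 2 + ∫ x, (η x * max 0 (1 - (ι f x + b)) +
          (1 - η x) * max 0 (1 + (ι f x + b))) ∂μ) :
    |btil| ≤ (⨆ x, |ι ftil x|) + 1 := by
  set M := ⨆ x, |ι ftil x| with hMdef
  have hXne : Nonempty X := by
    by_contra h
    have h0 : μ Set.univ = 0 := by
      rw [Set.univ_eq_empty_iff.mpr (not_nonempty_iff.mp h)]; simp
    simp [measure_univ] at h0
  have hbdd : BddAbove (Set.range fun x => |ι ftil x|) :=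
    ⟨K * ‖ftil‖, by rintro _ ⟨x, rfl⟩; exact hK ftil x⟩
  have hMle : ∀ x, |ι ftil x| ≤ M := fun x => le_ciSup hbdd x
  have hM0 : 0 ≤ M := le_trans (abs_nonneg _) (hMle hXne.some)
  have hint : ∀ (f : X → ℝ) (C : ℝ), Measurable f → (∀ x, |f x| ≤ C) → Integrable f μ := by
    intro f C hf hb
    refine ⟨hf.aestronglyMeasurable, ?_⟩
    exact HasFiniteIntegral.of_bounded (C := C) (ae_of_all _ hb)
  have hηint : Integrable η μ :=
    hint η 1 hηm (fun x => abs_le.mpr ⟨by linarith [(hη x).1], (hη x).2⟩)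
  have h1ηint : Integrable (fun x => 1 - η x) μ := (integrable_const 1).sub hηint
  -- positivity of ∫ (1 - η) and ∫ η
  have hc0 : 0 ≤ ∫ x, (1 - η x) ∂μ := integral_nonneg (fun x => by simpa using sub_nonneg.mpr (hη x).2)
  have hcpos : 0 < ∫ x, (1 - η x) ∂μ := by
    rcases hc0.lt_or_eq with h | h
    · exact h
    · exfalso
      apply hnd1
      have hz := (integral_eq_zero_iff_of_nonneg
        (fun x => by simpa using sub_nonneg.mpr (hη x).2 : ∀ x, 0 ≤ (fun x => 1 - η x) x) h1ηint).mp h.symm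
      filter_upwards [hz] with x hx
      have : 1 - η x = 0 := hx
      linarith
  have hd0 : 0 ≤ ∫ x, η x ∂μ := integral_nonneg (fun x => (hη x).1)
  have hdpos : 0 < ∫ x, η x ∂μ := by
    rcases hd0.lt_or_eq with h | h
    · exact h
    · exfalso
      apply hnd0
      have hz := (integral_eq_zero_iff_of_nonneg (fun x => (hη x).1) hηint).mp h.symm
      filter_upwards [hz] with x hx
      exact hx
  have hf1int : Integrable (fun x => (1 - η x) * (1 + ι ftil x)) μ := by
    refine hint _ (1 * (1 + M)) ((measurable_const.sub hηm).mul (measurable_const.add (hιm ftil))) ?_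
    intro x
    rw [abs_mul]
    apply mul_le_mul
    · rw [abs_le]; constructor <;> [linarith [(hη x).2]; linarith [(hη x).1]]
    · calc |1 + ι ftil x| ≤ 1 + |ι ftil x| := by
            have := abs_add_le (1:ℝ) (ι ftil x); simpa using this
        _ ≤ 1 + M := by linarith [hMle x]
    · exact abs_nonneg _
    · norm_num
  have hf2int : Integrable (fun x => η x * (1 - ι ftil x)) μ := by
    refine hint _ (1 * (1 + M)) (hηm.mul (measurable_const.sub (hιm ftil))) ?_
    intro x
    rw [abs_mul]
    apply mul_le_mul
    · rw [abs_le]; constructor <;> [linarith [(hη x).1]; linarith [(hη x).2]]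
    · calc |1 - ι ftil x| ≤ 1 + |ι ftil x| := by
            have := abs_sub (1:ℝ) (ι ftil x); simpa using this
        _ ≤ 1 + M := by linarith [hMle x]
    · exact abs_nonneg _
    · norm_num
  -- key formulas
  have keyA : ∀ b : ℝ, M + 1 ≤ b →
      (∫ x, (η x * max 0 (1 - (ι ftil x + b)) +
          (1 - η x) * max 0 (1 + (ι ftil x + b))) ∂μ)
      = (∫ x, (1 - η x) * (1 + ι ftil x) ∂μ) + b * ∫ x, (1 - η x) ∂μ := by
    intro b hb
    have hcong : (fun x => η x * max 0 (1 - (ι ftil x + b)) +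
        (1 - η x) * max 0 (1 + (ι ftil x + b)))
        = fun x => (1 - η x) * (1 + ι ftil x) + b * (1 - η x) := by
      funext x
      have hx := abs_le.mp (hMle x)
      have h1 : (1:ℝ) ≤ ι ftil x + b := by linarith [hx.1]
      have e1 : max 0 (1 - (ι ftil x + b)) = 0 := max_eq_left (by linarith)
      have e2 : max 0 (1 + (ι ftil x + b)) = 1 + (ι ftil x + b) := max_eq_right (by linarith)
      rw [e1, e2]; ring
    rw [hcong, integral_add hf1int (h1ηint.const_mul b), integral_const_mul]
  have keyB : ∀ b : ℝ, b ≤ -(M + 1) →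
      (∫ x, (η x * max 0 (1 - (ι ftil x + b)) +
          (1 - η x) * max 0 (1 + (ι ftil x + b))) ∂μ)
      = (∫ x, η x * (1 - ι ftil x) ∂μ) + (-b) * ∫ x, η x ∂μ := by
    intro b hb
    have hcong : (fun x => η x * max 0 (1 - (ι ftil x + b)) +
        (1 - η x) * max 0 (1 + (ι ftil x + b)))
        = fun x => η x * (1 - ι ftil x) + (-b) * η x := by
      funext x
      have hx := abs_le.mp (hMle x)
      have h1 : ι ftil x + b ≤ -1 := by linarith [hx.2]
      have e1 : max 0 (1 - (ι ftil x + b)) = 1 - (ι ftil x + b) := max_eq_right (by linarith)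
      have e2 : max 0 (1 + (ι ftil x + b)) = 0 := max_eq_left (by linarith)
      rw [e1, e2]; ring
    rw [hcong, integral_add hf2int (hηint.const_mul (-b)), integral_const_mul]
  by_contra hcon
  push_neg at hcon
  rcases lt_abs.mp hcon with h | h
  · -- btil > M + 1
    have h1 := hmin ftil (M + 1)
    rw [keyA btil h.le, keyA (M + 1) le_rfl] at h1
    nlinarith [hcpos, h]
  · -- btil < -(M+1)
    have h' : btil ≤ -(M + 1) := by linarith
    have h1 := hmin ftil (-(M + 1))
    rw [keyB btil h', keyB (-(M + 1)) le_rfl] at h1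
    nlinarith [hdpos]
end
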